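/- arXiv:1511.03953 — 3 statements merged into one kernel-verified Lean document; each statement's English description precedes it below -/
import Mathlib

section
/- Let e₁,…,e_{n+2} be the standard orthonormal basis of ℝ^{n+2}, and for a strictly increasing multi-index I = {i₁<⋯<i_p} let e*_I denote the axis p-form e*_{i₁}∧⋯∧e*_{i_p}. Let φ = e*_J ∧ e*_{n+1} ∧ e*_{n+2} where J = {j₁<⋯<j_{p-2}} ⊂ {1,…,n}, and let ψ = Σ_I c_I e*_I be any p-form whose multi-indices I all satisfy i_p ≤ n (i.e., ψ involves only the first n coordinates). Then the comass satisfies ‖φ + ψ‖* = max{1, ‖ψ‖*}. -/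
/-- The comass of an alternating `p`-form `φ` with respect to a bilinear form
(inner product) `g`. -/
noncomputable def comass {W : Type*} [AddCommGroup W] [Module ℝ W] {p : ℕ}
    (φ : W [⋀^Fin p]→ₗ[ℝ] ℝ) (g : W →ₗ[ℝ] W →ₗ[ℝ] ℝ) : ℝ :=
  sSup {c | ∃ v : Fin p → W,
    (Matrix.of fun i j : Fin p => g (v i) (v j)).det = 1 ∧ φ v = c}

/-- The standard Euclidean inner product on `ℝⁿ` as a bilinear form. -/
noncomputable def stdG (n : ℕ) : (Fin n → ℝ) →ₗ[ℝ] (Fin n → ℝ) →ₗ[ℝ] ℝ :=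
  LinearMap.mk₂ ℝ (fun x y => ∑ i, x i * y i)
    (fun x₁ x₂ y => by simp [add_mul, Finset.sum_add_distrib])
    (fun c x y => by simp [Finset.mul_sum, mul_assoc])
    (fun x y₁ y₂ => by simp [mul_add, Finset.sum_add_distrib])
    (fun c x y => by
      simp only [Pi.smul_apply, smul_eq_mul, Finset.mul_sum]
      exact Finset.sum_congr rfl fun i _ => by ring)

/-- The axis `p`-form `e*_I = e*_{i₁} ∧ ⋯ ∧ e*_{i_p}` on `ℝⁿ` attached to a
multi-index `I`. -/
noncomputable def axisForm {n p : ℕ} (I : Fin p → Fin n) :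
    (Fin n → ℝ) [⋀^Fin p]→ₗ[ℝ] ℝ :=
  ((Pi.basisFun ℝ (Fin p)).det).compLinearMap (LinearMap.funLeft ℝ ℝ I)

/-- The multi-index `(j₁, …, j_q, n+1, n+2)` (0-indexed: `J` followed by `n` and
`n+1`) defining `φ = e*_J ∧ e*_{n+1} ∧ e*_{n+2}`. -/
def phiIdx (n q : ℕ) (J : Fin q → Fin n) : Fin (q + 2) → Fin (n + 2) :=
  Fin.snoc (Fin.snoc (fun i => Fin.castLE (Nat.le_add_right n 2) (J i))
    (⟨n, by omega⟩ : Fin (n + 2))) (⟨n + 1, by omega⟩ : Fin (n + 2))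

/-
Both comasses are suprema over orthonormal `p`-frames `w` (rows of a matrix `B` with `B Bᵀ = 1`).
`P = BᵀB` is the orthogonal projection onto the span of the frame, and its compression `N` to the
last two coordinates satisfies `0 ≤ N ≤ 1`. A Fischer-type inequality gives
`φ(w)² = det P_{II} ≤ det N`, while `ψ` only sees the frame with its last two coordinates erased,
whose Gram determinant is `det (1 - N)`. Hence
`(φ + ψ)(w) ≤ √(det N) + ‖ψ‖* √(det (1 - N)) ≤ max 1 ‖ψ‖*`, by the `2 × 2` inequality
`√(det N) + √(det (1 - N)) ≤ 1`. Conversely, the coordinate frame of `φ` has value `1`, and erasing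
the last two coordinates of a frame kills `φ`, keeps `ψ` and does not increase the Gram
determinant, so `‖ψ‖* ≤ ‖φ + ψ‖*`.
-/

open Matrix

section RowGram

variable {p m : ℕ}

def rowGram (v : Fin p → Fin m → ℝ) : Matrix (Fin p) (Fin p) ℝ := of v * (of v)ᵀ

lemma rowGram_apply (v : Fin p → Fin m → ℝ) (i j : Fin p) :
    rowGram v i j = ∑ k, v i k * v j k := by
  simp [rowGram, mul_apply]

lemma of_stdG_eq_rowGram (v : Fin p → Fin m → ℝ) :
    of (fun i j => stdG m (v i) (v j)) = rowGram v := by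
  ext i j
  simp [stdG, rowGram_apply]

lemma posSemidef_rowGram (v : Fin p → Fin m → ℝ) : (rowGram v).PosSemidef := by
  simpa [rowGram] using posSemidef_self_mul_conjTranspose (of v)

lemma rowGram_mul (A : Matrix (Fin p) (Fin p) ℝ) (v : Fin p → Fin m → ℝ) :
    rowGram (of.symm (A * of v)) = A * rowGram v * Aᵀ := by
  simp only [rowGram, Equiv.apply_symm_apply, transpose_mul, Matrix.mul_assoc]

lemma rowGram_single {c : Fin p → Fin m} (hc : Function.Injective c) :
    rowGram (fun i => Pi.single (c i) 1) = 1 := by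
  ext i j
  simp [rowGram_apply, Pi.single_apply, one_apply, hc.eq_iff, eq_comm]

lemma rowGram_append {a b : ℕ} (x : Fin p → Fin a → ℝ) (y : Fin p → Fin b → ℝ) :
    rowGram (fun i => Fin.append (x i) (y i)) = rowGram x + rowGram y := by
  ext i j
  simp [rowGram_apply, Fin.sum_univ_add]

lemma AlternatingMap.map_matrix_mul (f : (Fin m → ℝ) [⋀^Fin p]→ₗ[ℝ] ℝ)
    (A : Matrix (Fin p) (Fin p) ℝ) (v : Fin p → Fin m → ℝ) :
    f (of.symm (A * of v)) = A.det * f v := by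
  have key := DFunLike.congr_fun
    ((f.compLinearMap (vecMulLinear (of v))).eq_smul_basis_det (Pi.basisFun ℝ (Fin p)))
    (A : Fin p → Fin p → ℝ)
  simp only [Pi.basisFun_det, Pi.basisFun_apply, AlternatingMap.compLinearMap_apply,
    vecMulLinear_apply, single_one_vecMul] at key
  exact key.trans (mul_comm _ _)

lemma AlternatingMap.map_eq_zero_of_det_rowGram_eq_zero (f : (Fin m → ℝ) [⋀^Fin p]→ₗ[ℝ] ℝ)
    {v : Fin p → Fin m → ℝ} (hv : (rowGram v).det = 0) : f v = 0 := by
  refine f.map_linearDependent v fun hli => ?_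
  obtain ⟨x, hx0, hx⟩ := exists_vecMul_eq_zero_iff.2 hv
  rw [rowGram, ← conjTranspose_eq_transpose_of_trivial, vecMul_self_mul_conjTranspose_eq_zero] at hx
  have hsum : ∑ i, x i • v i = 0 := funext fun k => by
    simpa [vecMul, dotProduct] using congrFun hx k
  exact hx0 (funext (Fintype.linearIndependent_iff.1 hli x hsum))

open scoped MatrixOrder in
lemma exists_rowGram_eq_one {v : Fin p → Fin m → ℝ} (hv : (rowGram v).det ≠ 0) :
    ∃ w, rowGram w = 1 ∧
      ∀ f : (Fin m → ℝ) [⋀^Fin p]→ₗ[ℝ] ℝ, f v = √(rowGram v).det * f w := by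
  have hG := posSemidef_rowGram v
  set S := CFC.sqrt (rowGram v)
  have hSS : S * S = rowGram v := CFC.sqrt_mul_sqrt_self _ hG.nonneg
  have hdetS : S.det = √(rowGram v).det := by simpa using hG.det_sqrt
  have hSunit : IsUnit S.det :=
    isUnit_iff_ne_zero.2 fun h => hv (by rw [← hSS, det_mul, h, zero_mul])
  have hST : Sᵀ = S := (CFC.sqrt_nonneg (rowGram v)).posSemidef.1.eq
  refine ⟨of.symm (S⁻¹ * of v), ?_, fun f => ?_⟩
  · rw [rowGram_mul, ← hSS, transpose_nonsing_inv, hST, Matrix.mul_assoc, Matrix.mul_assoc,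
      mul_nonsing_inv _ hSunit, Matrix.mul_one, nonsing_inv_mul _ hSunit]
  · rw [← hdetS, ← AlternatingMap.map_matrix_mul, Equiv.apply_symm_apply,
      mul_nonsing_inv_cancel_left _ _ hSunit, Equiv.symm_apply_apply]

lemma abs_le_one_of_rowGram_eq_one {w : Fin p → Fin m → ℝ} (hw : rowGram w = 1) (i : Fin p)
    (k : Fin m) : |w i k| ≤ 1 := by
  have hii : ∑ k, w i k * w i k = 1 := by rw [← rowGram_apply, hw, one_apply_eq]
  refine abs_le_one_iff_mul_self_le_one.2 (hii ▸ ?_)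
  exact Finset.single_le_sum (f := fun k => w i k * w i k) (fun k _ => mul_self_nonneg _)
    (Finset.mem_univ k)

lemma AlternatingMap.apply_eq_sum_single (f : (Fin m → ℝ) [⋀^Fin p]→ₗ[ℝ] ℝ)
    (w : Fin p → Fin m → ℝ) :
    f w = ∑ c : Fin p → Fin m, (∏ i, w i (c i)) * f (fun i => Pi.single (c i) 1) := by
  have hw : w = fun i => ∑ k, w i k • (Pi.single k 1 : Fin m → ℝ) :=
    funext fun i => by ext k; simp [Pi.single_apply]
  conv_lhs => rw [hw]
  rw [← f.coe_multilinearMap, MultilinearMap.map_sum]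
  simp [MultilinearMap.map_smul_univ]

end RowGram

section Comass

variable {p m : ℕ} (f : (Fin m → ℝ) [⋀^Fin p]→ₗ[ℝ] ℝ)

lemma comass_stdG_eq_sSup : comass f (stdG m) = sSup (f '' {w | rowGram w = 1}) := by
  rw [comass]
  congr 1
  ext c
  simp only [of_stdG_eq_rowGram, Set.mem_ofPred_eq, Set.mem_image]
  constructor
  · rintro ⟨v, hv, rfl⟩
    obtain ⟨w, hw, hfw⟩ := exists_rowGram_eq_one (hv.symm ▸ one_ne_zero)
    exact ⟨w, hw, by rw [hfw, hv, Real.sqrt_one, one_mul]⟩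
  · rintro ⟨w, hw, rfl⟩
    exact ⟨w, by rw [hw, det_one], rfl⟩

lemma bddAbove_image_setOf_rowGram_eq_one : BddAbove (f '' {w | rowGram w = 1}) := by
  refine ⟨∑ c : Fin p → Fin m, |f (fun i => Pi.single (c i) 1)|, ?_⟩
  rintro _ ⟨w, hw, rfl⟩
  rw [f.apply_eq_sum_single]
  refine (le_abs_self _).trans <| (Finset.abs_sum_le_sum_abs _ _).trans <|
    Finset.sum_le_sum fun c _ => ?_
  rw [abs_mul, Finset.abs_prod]
  exact mul_le_of_le_one_left (abs_nonneg _) <| Finset.prod_le_one (fun _ _ => abs_nonneg _)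
    fun i _ => abs_le_one_of_rowGram_eq_one hw i (c i)

lemma le_comass {w : Fin p → Fin m → ℝ} (hw : rowGram w = 1) : f w ≤ comass f (stdG m) := by
  rw [comass_stdG_eq_sSup]
  exact le_csSup (bddAbove_image_setOf_rowGram_eq_one f) ⟨w, hw, rfl⟩

lemma comass_le {C : ℝ} (hne : ∃ w : Fin p → Fin m → ℝ, rowGram w = 1)
    (h : ∀ w, rowGram w = 1 → f w ≤ C) : comass f (stdG m) ≤ C := by
  rw [comass_stdG_eq_sSup]
  obtain ⟨w, hw⟩ := hne
  exact csSup_le ⟨f w, w, hw, rfl⟩ (by rintro _ ⟨w, hw, rfl⟩; exact h w hw)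

lemma neg_le_comass (hp : 0 < p) {w : Fin p → Fin m → ℝ} (hw : rowGram w = 1) :
    -f w ≤ comass f (stdG m) := by
  set d : Fin p → ℝ := Function.update 1 ⟨0, hp⟩ (-1)
  have hd : ∀ i, d i * d i = 1 := fun i => by
    rcases eq_or_ne i ⟨0, hp⟩ with rfl | hi <;> simp [d, Function.update_of_ne, *]
  have hD : diagonal d * (diagonal d)ᵀ = 1 := by
    rw [diagonal_transpose, diagonal_mul_diagonal, funext hd, diagonal_one]
  have hdetD : (diagonal d).det = -1 := by
    simp [d, det_diagonal, Finset.prod_update_of_mem]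
  have h := le_comass f (w := of.symm (diagonal d * of w))
    (by rw [rowGram_mul, hw, Matrix.mul_one, hD])
  rwa [f.map_matrix_mul, hdetD, neg_one_mul] at h

lemma abs_le_comass_mul_sqrt_det (hp : 0 < p) (v : Fin p → Fin m → ℝ) :
    |f v| ≤ comass f (stdG m) * √(rowGram v).det := by
  by_cases hv : (rowGram v).det = 0
  · simp [f.map_eq_zero_of_det_rowGram_eq_zero hv, hv]
  obtain ⟨w, hw, hfw⟩ := exists_rowGram_eq_one hv
  rw [hfw f, abs_mul, abs_of_nonneg (Real.sqrt_nonneg _), mul_comm]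
  exact mul_le_mul_of_nonneg_right
    (abs_le.2 ⟨neg_le.1 (neg_le_comass f hp hw), le_comass f hw⟩) (Real.sqrt_nonneg _)

end Comass

section DetBounds

variable {k l : Type*} [DecidableEq k] [DecidableEq l]

lemma posSemidef_one_sub_submatrix {M : Matrix k k ℝ} (h : (1 - M).PosSemidef)
    {e : l → k} (he : Function.Injective e) : (1 - M.submatrix e e).PosSemidef := by
  simpa [submatrix_sub, submatrix_one _ he] using h.submatrix e

variable [Fintype k] [Fintype l]

open scoped MatrixOrder in
lemma det_le_one_of_posSemidef {A : Matrix k k ℝ} (hA : A.PosSemidef)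
    (hA1 : (1 - A).PosSemidef) : A.det ≤ 1 := by
  have hle : A ≤ algebraMap ℝ _ 1 := by rw [map_one]; exact hA1
  have hspec := (le_algebraMap_iff_spectrum_le hA.1.isSelfAdjoint).1 hle
  rw [hA.1.det_eq_prod_eigenvalues]
  exact_mod_cast Finset.prod_le_one (fun i _ => hA.eigenvalues_nonneg i)
    fun i _ => hspec _ (hA.1.eigenvalues_mem_spectrum_real i)

lemma det_le_det_toBlocks₂₂ {M : Matrix (k ⊕ l) (k ⊕ l) ℝ} (hM : M.PosSemidef)
    (hM1 : (1 - M).PosSemidef) : M.det ≤ M.toBlocks₂₂.det := by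
  have hD : M.toBlocks₂₂.PosSemidef := hM.submatrix Sum.inr
  have hA1 : (1 - M.toBlocks₁₁).PosSemidef := posSemidef_one_sub_submatrix hM1 Sum.inl_injective
  have hBC : M.toBlocks₁₂ᴴ = M.toBlocks₂₁ :=
    (isHermitian_fromBlocks_iff.1 (M.fromBlocks_toBlocks ▸ hM.1)).2.1
  rw [← M.fromBlocks_toBlocks, ← hBC] at hM
  conv_lhs => rw [← M.fromBlocks_toBlocks, ← hBC]
  set A := M.toBlocks₁₁
  set B := M.toBlocks₁₂
  set D := M.toBlocks₂₂
  -- A kernel vector of a singular `D` extends to one of `M`; otherwise `det M = det D * det S`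
  -- for the Schur complement `S = A - B D⁻¹ Bᴴ`, and `0 ≤ S ≤ 1`.
  by_cases hdetD : D.det = 0
  · obtain ⟨x, hx0, hx⟩ := exists_mulVec_eq_zero_iff.2 hdetD
    have hy : (fromBlocks A B Bᴴ D) *ᵥ Sum.elim 0 x = 0 := by
      refine (hM.dotProduct_mulVec_zero_iff _).1 ?_
      simp [fromBlocks_mulVec, hx]
    have hy0 : (Sum.elim 0 x : k ⊕ l → ℝ) ≠ 0 :=
      fun h => hx0 (funext fun i => congrFun h (Sum.inr i))
    rw [exists_mulVec_eq_zero_iff.1 ⟨_, hy0, hy⟩, hdetD]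
  · have hDpos := hD.posDef_iff_det_ne_zero.2 hdetD
    let := hDpos.isUnit.invertible
    rw [det_fromBlocks₂₂, invOf_eq_nonsing_inv]
    have hS := (PosDef.fromBlocks₂₂ _ _ hDpos).1 hM
    have hS1 : (1 - (A - B * D⁻¹ * Bᴴ)).PosSemidef := by
      rw [sub_sub_eq_add_sub, add_sub_right_comm]
      exact hA1.add (hD.inv.mul_mul_conjTranspose_same B)
    exact mul_le_of_le_one_right hD.det_nonneg (det_le_one_of_posSemidef hS hS1)

end DetBounds

lemma sqrt_add_sqrt_le_one {a b c : ℝ} (ha : 0 ≤ a) (hc : 0 ≤ c) (ha1 : a ≤ 1) (hc1 : c ≤ 1)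
    (h : 0 ≤ a * c - b ^ 2) (h' : 0 ≤ (1 - a) * (1 - c) - b ^ 2) :
    √(a * c - b ^ 2) + √((1 - a) * (1 - c) - b ^ 2) ≤ 1 := by
  set x := √(a * c - b ^ 2)
  set y := √((1 - a) * (1 - c) - b ^ 2)
  have hx : x ^ 2 = a * c - b ^ 2 := Real.sq_sqrt h
  have hy : y ^ 2 = (1 - a) * (1 - c) - b ^ 2 := Real.sq_sqrt h'
  have hxy : x * y ≤ (a * (1 - c) + c * (1 - a)) / 2 := by
    refine abs_le_of_sq_le_sq' ?_ (by positivity) |>.2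
    -- `(x y)² ≤ a c (1 - a) (1 - c) ≤ ((a (1 - c) + c (1 - a)) / 2)²`
    rw [mul_pow, hx, hy]
    nlinarith [sq_nonneg (a * (1 - c) - c * (1 - a)), mul_nonneg (sq_nonneg b) h,
      mul_nonneg (sq_nonneg b) (mul_nonneg (sub_nonneg.2 ha1) (sub_nonneg.2 hc1))]
  nlinarith [Real.sqrt_nonneg (a * c - b ^ 2), Real.sqrt_nonneg ((1 - a) * (1 - c) - b ^ 2),
    sq_nonneg b]

lemma sqrt_det_add_sqrt_det_one_sub_le_one {N : Matrix (Fin 2) (Fin 2) ℝ} (hN : N.PosSemidef)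
    (hN1 : (1 - N).PosSemidef) : √N.det + √(1 - N).det ≤ 1 := by
  have hsymm : N 1 0 = N 0 1 := by simpa using congrFun (congrFun hN.1.eq 0) 1
  have h00 : 0 ≤ 1 - N 0 0 := by simpa using hN1.diag_nonneg (i := 0)
  have h11 : 0 ≤ 1 - N 1 1 := by simpa using hN1.diag_nonneg (i := 1)
  have hdet : N.det = N 0 0 * N 1 1 - N 0 1 ^ 2 := by rw [det_fin_two, hsymm]; ring
  have hdet' : (1 - N).det = (1 - N 0 0) * (1 - N 1 1) - N 0 1 ^ 2 := by
    simp only [det_fin_two, Matrix.sub_apply, one_apply_eq, one_apply_ne zero_ne_one,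
      one_apply_ne one_ne_zero, hsymm]
    ring
  rw [hdet, hdet']
  exact sqrt_add_sqrt_le_one hN.diag_nonneg hN.diag_nonneg (by linarith) (by linarith)
    (hdet ▸ hN.det_nonneg) (hdet' ▸ hN1.det_nonneg)

section LastTwoCoordinates

variable {n p : ℕ}

def zeroLastTwo (w : Fin p → Fin (n + 2) → ℝ) : Fin p → Fin (n + 2) → ℝ :=
  fun i => Fin.append (w i ∘ Fin.castAdd 2) 0

def lastTwoGram (w : Fin p → Fin (n + 2) → ℝ) : Matrix (Fin 2) (Fin 2) ℝ :=
  ((of w)ᵀ * of w).submatrix (Fin.natAdd n) (Fin.natAdd n)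

lemma posSemidef_one_sub_transpose_mul_self {a b : Type*} [Fintype a] [Fintype b] [DecidableEq a]
    [DecidableEq b] {B : Matrix a b ℝ} (hB : B * Bᵀ = 1) : (1 - Bᵀ * B).PosSemidef := by
  have hproj : (1 - Bᵀ * B)ᵀ * (1 - Bᵀ * B) = 1 - Bᵀ * B := by
    rw [transpose_sub, transpose_one, transpose_mul, transpose_transpose, Matrix.sub_mul,
      Matrix.one_mul, Matrix.mul_sub, Matrix.mul_one, Matrix.mul_assoc, ← Matrix.mul_assoc B,
      hB, Matrix.one_mul]
    abel
  have h := posSemidef_conjTranspose_mul_self (1 - Bᵀ * B)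
  rwa [conjTranspose_eq_transpose_of_trivial, hproj] at h

lemma posSemidef_lastTwoGram (w : Fin p → Fin (n + 2) → ℝ) : (lastTwoGram w).PosSemidef := by
  simpa [lastTwoGram] using (posSemidef_conjTranspose_mul_self (of w)).submatrix (Fin.natAdd n)

lemma posSemidef_one_sub_lastTwoGram {w : Fin p → Fin (n + 2) → ℝ} (hw : rowGram w = 1) :
    (1 - lastTwoGram w).PosSemidef :=
  posSemidef_one_sub_submatrix (posSemidef_one_sub_transpose_mul_self hw)
    (Fin.natAdd_injective _ _)

lemma rowGram_zeroLastTwo {w : Fin p → Fin (n + 2) → ℝ} (hw : rowGram w = 1) :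
    rowGram (zeroLastTwo w) = 1 - rowGram (fun i => w i ∘ Fin.natAdd n) := by
  have hsplit : rowGram w =
      rowGram (fun i => w i ∘ Fin.castAdd 2) + rowGram (fun i => w i ∘ Fin.natAdd n) := by
    rw [← rowGram_append]
    exact congrArg rowGram (funext fun i => Fin.append_castAdd_natAdd.symm)
  have hzero : rowGram (fun _ : Fin p => (0 : Fin 2 → ℝ)) = 0 := by ext; simp [rowGram_apply]
  unfold zeroLastTwo
  rw [rowGram_append, hzero, add_zero, ← hw, hsplit, add_sub_cancel_right]

lemma det_rowGram_zeroLastTwo {w : Fin p → Fin (n + 2) → ℝ} (hw : rowGram w = 1) :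
    (rowGram (zeroLastTwo w)).det = (1 - lastTwoGram w).det := by
  rw [rowGram_zeroLastTwo hw, rowGram, det_one_sub_mul_comm]
  rfl

end LastTwoCoordinates

section AxisForm

variable {n p q : ℕ}

lemma axisForm_apply (I : Fin p → Fin n) (v : Fin p → Fin n → ℝ) :
    axisForm I v = ((of v).submatrix id I).det := by
  simp only [axisForm, AlternatingMap.compLinearMap_apply, Pi.basisFun_det_apply]
  rfl

lemma axisForm_single {I : Fin p → Fin n} (hI : Function.Injective I) :
    axisForm I (fun i => Pi.single (I i) 1) = 1 := by
  rw [axisForm_apply, ← det_one (n := Fin p)]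
  congr 1
  ext i j
  simp [Pi.single_apply, one_apply, hI.eq_iff, eq_comm]

lemma phiIdx_last (J : Fin q → Fin n) : phiIdx n q J (Fin.last (q + 1)) = Fin.natAdd n 1 :=
  Fin.snoc_last _ _

lemma phiIdx_comp_finSumFinEquiv (J : Fin q → Fin n) :
    phiIdx n q J ∘ finSumFinEquiv = Sum.elim (Fin.castAdd 2 ∘ J) (Fin.natAdd n) := by
  funext x
  rcases x with i | t
  · exact (Fin.snoc_castSucc (α := fun _ => Fin (n + 2)) _ _ (Fin.castSucc i)).trans
      (Fin.snoc_castSucc _ _ i)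
  · fin_cases t
    · exact (Fin.snoc_castSucc (α := fun _ => Fin (n + 2)) _ _ (Fin.last q)).trans
        (Fin.snoc_last _ _)
    · exact phiIdx_last J

lemma phiIdx_injective {J : Fin q → Fin n} (hJ : Function.Injective J) :
    Function.Injective (phiIdx n q J) := by
  have h : Function.Injective (phiIdx n q J ∘ finSumFinEquiv) := by
    rw [phiIdx_comp_finSumFinEquiv]
    refine (Fin.castAdd_injective _ _ |>.comp hJ).sumElim (Fin.natAdd_injective _ _) ?_
    intro i t h
    have := (J i).isLt
    simp only [Function.comp_apply, Fin.ext_iff, Fin.val_castAdd, Fin.val_natAdd] at h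
    omega
  simpa using h.comp finSumFinEquiv.symm.injective

lemma sq_axisForm_phiIdx_le {J : Fin q → Fin n} (hJ : Function.Injective J)
    {w : Fin (q + 2) → Fin (n + 2) → ℝ} (hw : rowGram w = 1) :
    axisForm (phiIdx n q J) w ^ 2 ≤ (lastTwoGram w).det := by
  set I := phiIdx n q J ∘ finSumFinEquiv
  have hI : Function.Injective I := (phiIdx_injective hJ).comp finSumFinEquiv.injective
  set P := (of w)ᵀ * of w
  have hblock : (P.submatrix I I).toBlocks₂₂ = lastTwoGram w := by
    simp only [I, phiIdx_comp_finSumFinEquiv]; rfl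
  set C := (of w).submatrix id (phiIdx n q J)
  calc axisForm (phiIdx n q J) w ^ 2 = (Cᵀ * C).det := by
        rw [axisForm_apply, det_mul, det_transpose, sq]
    _ = (P.submatrix I I).det := by
        rw [← det_submatrix_equiv_self finSumFinEquiv]
        rfl
    _ ≤ (lastTwoGram w).det := hblock ▸ det_le_det_toBlocks₂₂
        ((posSemidef_conjTranspose_mul_self (of w)).submatrix I)
        (posSemidef_one_sub_submatrix (posSemidef_one_sub_transpose_mul_self hw) hI)

lemma axisForm_phiIdx_zeroLastTwo (J : Fin q → Fin n) (w : Fin (q + 2) → Fin (n + 2) → ℝ) :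
    axisForm (phiIdx n q J) (zeroLastTwo w) = 0 := by
  rw [axisForm_apply]
  refine det_eq_zero_of_column_eq_zero (Fin.last (q + 1)) fun i => ?_
  simp [phiIdx_last, zeroLastTwo]

end AxisForm

lemma compLinearMap_funLeft_zeroLastTwo {n p : ℕ} (ψ₀ : (Fin n → ℝ) [⋀^Fin p]→ₗ[ℝ] ℝ)
    (w : Fin p → Fin (n + 2) → ℝ) :
    ψ₀.compLinearMap (LinearMap.funLeft ℝ ℝ (Fin.castLE (Nat.le_add_right n 2))) (zeroLastTwo w) =
      ψ₀.compLinearMap (LinearMap.funLeft ℝ ℝ (Fin.castLE (Nat.le_add_right n 2))) w := by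
  simp only [AlternatingMap.compLinearMap_apply]
  congr 1
  funext i j
  exact Fin.append_left _ _ j

lemma compLinearMap_funLeft_single_phiIdx {n q : ℕ} (ψ₀ : (Fin n → ℝ) [⋀^Fin (q + 2)]→ₗ[ℝ] ℝ)
    (J : Fin q → Fin n) :
    ψ₀.compLinearMap (LinearMap.funLeft ℝ ℝ (Fin.castLE (Nat.le_add_right n 2)))
      (fun i => Pi.single (phiIdx n q J i) 1) = 0 := by
  rw [AlternatingMap.compLinearMap_apply]
  refine ψ₀.map_coord_zero (Fin.last (q + 1)) (funext fun j => ?_)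
  refine Pi.single_eq_of_ne (fun h => ?_) _
  have := congrArg Fin.val (h.trans (phiIdx_last J))
  simp only [Fin.val_castLE, Fin.val_natAdd] at this
  omega

section Main

variable {n q : ℕ} {J : Fin q → Fin n} {ψ : (Fin (n + 2) → ℝ) [⋀^Fin (q + 2)]→ₗ[ℝ] ℝ}

lemma axisForm_add_apply_le_max (hJ : Function.Injective J)
    (hψ : ∀ w, ψ (zeroLastTwo w) = ψ w) {w : Fin (q + 2) → Fin (n + 2) → ℝ} (hw : rowGram w = 1) :
    (axisForm (phiIdx n q J) + ψ) w ≤ max 1 (comass ψ (stdG (n + 2))) := by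
  set M := comass ψ (stdG (n + 2))
  set N := lastTwoGram w
  have hφ : axisForm (phiIdx n q J) w ≤ √N.det :=
    (le_abs_self _).trans (Real.abs_le_sqrt (sq_axisForm_phiIdx_le hJ hw))
  have hψw : ψ w ≤ M * √(1 - N).det := by
    rw [← hψ, ← det_rowGram_zeroLastTwo hw]
    exact (le_abs_self _).trans (abs_le_comass_mul_sqrt_det ψ (by omega) _)
  calc (axisForm (phiIdx n q J) + ψ) w ≤ √N.det + M * √(1 - N).det := add_le_add hφ hψw
    _ ≤ max 1 M * (√N.det + √(1 - N).det) := by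
        rw [mul_add]
        exact add_le_add (le_mul_of_one_le_left (Real.sqrt_nonneg _) (le_max_left _ _))
          (mul_le_mul_of_nonneg_right (le_max_right _ _) (Real.sqrt_nonneg _))
    _ ≤ max 1 M := mul_le_of_le_one_right (zero_le_one.trans (le_max_left _ _))
        (sqrt_det_add_sqrt_det_one_sub_le_one (posSemidef_lastTwoGram w)
          (posSemidef_one_sub_lastTwoGram hw))

lemma apply_le_comass_axisForm_add (hψ : ∀ w, ψ (zeroLastTwo w) = ψ w)
    (hK : 0 ≤ comass (axisForm (phiIdx n q J) + ψ) (stdG (n + 2)))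
    {w : Fin (q + 2) → Fin (n + 2) → ℝ} (hw : rowGram w = 1) :
    ψ w ≤ comass (axisForm (phiIdx n q J) + ψ) (stdG (n + 2)) := by
  have hdet : (rowGram (zeroLastTwo w)).det ≤ 1 := by
    rw [det_rowGram_zeroLastTwo hw]
    exact det_le_one_of_posSemidef (posSemidef_one_sub_lastTwoGram hw)
      (by simpa using posSemidef_lastTwoGram w)
  calc ψ w = (axisForm (phiIdx n q J) + ψ) (zeroLastTwo w) := by
        rw [AlternatingMap.add_apply, axisForm_phiIdx_zeroLastTwo, zero_add, hψ]
    _ ≤ comass (axisForm (phiIdx n q J) + ψ) (stdG (n + 2)) * √(rowGram (zeroLastTwo w)).det :=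
        (le_abs_self _).trans (abs_le_comass_mul_sqrt_det _ (by omega) _)
    _ ≤ comass (axisForm (phiIdx n q J) + ψ) (stdG (n + 2)) :=
        mul_le_of_le_one_right hK (Real.sqrt_le_one.2 hdet)

end Main

/-- Let `φ = e*_J ∧ e*_{n+1} ∧ e*_{n+2}` (a `p`-form on `ℝ^{n+2}`, `p = q+2`,
involving both of the last two coordinates), and let `ψ` be any `p`-form
involving only the first `n` coordinates (i.e. the pullback of a `p`-form `ψ₀`
on `ℝⁿ` under the coordinate projection).  Then `‖φ + ψ‖* = max {1, ‖ψ‖*}`. -/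
theorem stmt5 (n q : ℕ) (J : Fin q → Fin n) (hJ : StrictMono J)
    (ψ₀ : (Fin n → ℝ) [⋀^Fin (q + 2)]→ₗ[ℝ] ℝ) :
    comass (axisForm (phiIdx n q J) +
        ψ₀.compLinearMap (LinearMap.funLeft ℝ ℝ (Fin.castLE (Nat.le_add_right n 2))))
      (stdG (n + 2)) =
    max 1 (comass
        (ψ₀.compLinearMap (LinearMap.funLeft ℝ ℝ (Fin.castLE (Nat.le_add_right n 2))))
      (stdG (n + 2))) := by
  set ψ := ψ₀.compLinearMap (LinearMap.funLeft ℝ ℝ (Fin.castLE (Nat.le_add_right n 2)))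
  have hψ : ∀ w, ψ (zeroLastTwo w) = ψ w := compLinearMap_funLeft_zeroLastTwo ψ₀
  set e : Fin (q + 2) → Fin (n + 2) → ℝ := fun i => Pi.single (phiIdx n q J i) 1
  have he : rowGram e = 1 := rowGram_single (phiIdx_injective hJ.injective)
  have hψe : ψ e = 0 := compLinearMap_funLeft_single_phiIdx ψ₀ J
  have h1 : 1 ≤ comass (axisForm (phiIdx n q J) + ψ) (stdG (n + 2)) := by
    have h := le_comass (axisForm (phiIdx n q J) + ψ) he
    rwa [AlternatingMap.add_apply, axisForm_single (phiIdx_injective hJ.injective), hψe,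
      add_zero] at h
  exact le_antisymm
    (comass_le _ ⟨e, he⟩ fun w hw => axisForm_add_apply_le_max hJ.injective hψ hw)
    (max_le h1 (comass_le _ ⟨e, he⟩ fun w hw =>
      apply_le_comass_axisForm_add hψ (zero_le_one.trans h1) hw))
end

section
/- Let V ⊂ ℝ^n be a linear subspace and ξ a unit simple p-vector in Λ^p ℝ^n. Then there exist orthonormal vectors f₁,…,f_r in V, orthonormal vectors g₁,…,g_s in V^⊥, and angles 0 < θⱼ < π/2 for j = 1,…,k (with k ≤ r, k ≤ s, and r + s − k = p) such that ξ = (cos θ₁ f₁ + sin θ₁ g₁) ∧ ⋯ ∧ (cos θ_k f_k + sin θ_k g_k) ∧ f_{k+1} ∧ ⋯ ∧ f_r ∧ g_{k+1} ∧ ⋯ ∧ g_s. -/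
/-!
Let `W` be the span of `v₁, …, v_p` and `A : W → ℝⁿ` the restriction of the orthogonal
projection onto `V`. An orthonormal eigenbasis `e` of the symmetric operator `A* A` on `W` has
pairwise orthogonal images under `A`, so the components of its vectors along `V` are pairwise
orthogonal, and then so are their components along `V^⊥`. Order this basis so that the vectors
lying neither in `V` nor in `V^⊥` come first, then those in `V`, then those in `V^⊥`, and negate
one vector if needed so that it is positively oriented relative to `v`; since the Gram
determinant of `v` is `1`, the change-of-basis determinant is then `1` and
`v₁ ∧ ⋯ ∧ v_p = e₁ ∧ ⋯ ∧ e_p`. Each mixed vector splits as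
`eᵢ = ‖P_V eᵢ‖ fᵢ + ‖P_{V^⊥} eᵢ‖ gᵢ = cos θᵢ fᵢ + sin θᵢ gᵢ` with `fᵢ`, `gᵢ` the normalised
components, while the other vectors are themselves the remaining `f`'s and `g`'s.
-/

open Module Matrix
open scoped RealInnerProductSpace InnerProductSpace

theorem AlternatingMap.map_eq_basis_det_smul {R M N ι : Type*} [CommRing R] [AddCommGroup M]
    [Module R M] [AddCommGroup N] [Module R N] [Fintype ι] [DecidableEq ι]
    (e : Basis ι R M) (f : M [⋀^ι]→ₗ[R] N) (v : ι → M) : f v = e.det v • f e := by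
  have : f = (LinearMap.toSpanSingleton R N (f e)).compAlternatingMap e.det := by
    refine e.ext_alternating fun i hi => ?_
    let σ : Equiv.Perm ι := Equiv.ofBijective i (Finite.injective_iff_bijective.1 hi)
    change f (e ∘ σ) = e.det (e ∘ σ) • f e
    simp [AlternatingMap.map_perm, Basis.det_self]
  conv_lhs => rw [this]
  rfl

theorem Monotone.exists_le_iff_lt {α : Type*} [Preorder α] {p : ℕ} {f : Fin p → α}
    (hf : Monotone f) (t : α) : ∃ m ≤ p, ∀ i : Fin p, f i ≤ t ↔ (i : ℕ) < m := by
  classical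
  refine ⟨(Finset.univ.filter fun i => f i ≤ t).card,
    (Finset.card_filter_le _ _).trans_eq (Finset.card_fin p), fun i => ⟨fun hi => ?_, fun hi => ?_⟩⟩
  · have : Finset.Iic i ⊆ Finset.univ.filter fun j => f j ≤ t := fun j hj =>
      Finset.mem_filter.2 ⟨Finset.mem_univ _, (hf (Finset.mem_Iic.1 hj)).trans hi⟩
    simpa using Finset.card_le_card this
  · by_contra hit
    have : (Finset.univ.filter fun j => f j ≤ t) ⊆ Finset.Iio i := fun j hj => by
      simp only [Finset.mem_filter, Finset.mem_univ, true_and] at hj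
      exact Finset.mem_Iio.2 (lt_of_not_ge fun hij => hit ((hf hij).trans hj))
    simpa using (Finset.card_le_card this).trans_lt' hi

theorem exists_angle_cos_sin_eq {a b : ℝ} (ha : 0 < a) (hb : 0 < b) (hab : a ^ 2 + b ^ 2 = 1) :
    ∃ θ, (0 < θ ∧ θ < Real.pi / 2) ∧ Real.cos θ = a ∧ Real.sin θ = b := by
  have ha1 : a < 1 := by nlinarith
  refine ⟨Real.arccos a, ⟨Real.arccos_pos.2 ha1, Real.arccos_lt_pi_div_two.2 ha⟩,
    Real.cos_arccos (by linarith) ha1.le, ?_⟩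
  rw [Real.sin_arccos, show 1 - a ^ 2 = b ^ 2 by linarith, Real.sqrt_sq hb.le]

theorem orthonormal_normalize {E ι : Type*} [NormedAddCommGroup E] [InnerProductSpace ℝ E]
    {v : ι → E} (hv : ∀ i, v i ≠ 0) (horth : Pairwise fun i j => ⟪v i, v j⟫ = 0) :
    Orthonormal ℝ (NormedSpace.normalize ∘ v) :=
  ⟨fun i => NormedSpace.norm_normalize_eq_one_iff.2 (hv i), fun i j hij => by
    simp [NormedSpace.normalize, real_inner_smul_left, real_inner_smul_right, horth hij]⟩

section
variable {𝕜 E F : Type*} [RCLike 𝕜] [NormedAddCommGroup E] [InnerProductSpace 𝕜 E]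
  [NormedAddCommGroup F] [InnerProductSpace 𝕜 F] [FiniteDimensional 𝕜 E] [FiniteDimensional 𝕜 F]

theorem LinearMap.exists_orthonormalBasis_pairwise_inner_eq_zero {n : ℕ}
    (hn : finrank 𝕜 E = n) (A : E →ₗ[𝕜] F) :
    ∃ b : OrthonormalBasis (Fin n) 𝕜 E, Pairwise fun i j => ⟪A (b i), A (b j)⟫_𝕜 = 0 := by
  have hT := A.isSymmetric_adjoint_comp_self
  refine ⟨hT.eigenvectorBasis hn, fun i j hij => ?_⟩
  dsimp only
  rw [← LinearMap.adjoint_inner_left, ← LinearMap.comp_apply, hT.apply_eigenvectorBasis,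
    inner_smul_left, (hT.eigenvectorBasis hn).orthonormal.inner_eq_zero hij, mul_zero]
end

section
variable {W ι : Type*} [NormedAddCommGroup W] [InnerProductSpace ℝ W] [Fintype ι] [DecidableEq ι]

theorem OrthonormalBasis.det_gram_eq_sq (b : OrthonormalBasis ι ℝ W) (v : ι → W) :
    (gram ℝ v).det = b.toBasis.det v ^ 2 := by
  rw [gram_eq_conjTranspose_mul b, det_mul, det_conjTranspose, Basis.det_apply, sq]
  congr 2

theorem OrthonormalBasis.exists_det_eq_one [FiniteDimensional ℝ W] (b : OrthonormalBasis ι ℝ W)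
    {v : ι → W} (hv : (gram ℝ v).det = 1) :
    ∃ b' : OrthonormalBasis ι ℝ W, (∀ i, b' i = b i ∨ b' i = -b i) ∧ b'.toBasis.det v = 1 := by
  cases isEmpty_or_nonempty ι
  · exact ⟨b, fun i => .inl rfl, by simp [Basis.det_isEmpty]⟩
  have hli : LinearIndependent ℝ v := det_gram_ne_zero_iff_linearIndependent.1 (by simp [hv])
  let bv := basisOfLinearIndependentOfCardEqFinrank hli (finrank_eq_card_basis b.toBasis).symm
  let b' := b.adjustToOrientation bv.orientation
  have hpos : 0 < b'.toBasis.det v := by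
    simpa [bv] using
      (b'.toBasis.orientation_eq_iff_det_pos bv).1 (b.orientation_adjustToOrientation _)
  have hsq : b'.toBasis.det v ^ 2 = 1 := by rw [← b'.det_gram_eq_sq, hv]
  refine ⟨b', b.adjustToOrientation_apply_eq_or_eq_neg _, ?_⟩
  nlinarith
end

namespace Submodule

variable {E : Type*} [NormedAddCommGroup E] [InnerProductSpace ℝ E]
  (V : Submodule ℝ E) [V.HasOrthogonalProjection]

theorem inner_starProjection_orthogonal (x y : E) :
    ⟪Vᗮ.starProjection x, Vᗮ.starProjection y⟫ =
      ⟪x, y⟫ - ⟪V.starProjection x, V.starProjection y⟫ := by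
  rw [inner_starProjection_left_eq_right, inner_starProjection_left_eq_right V,
    starProjection_eq_self_iff.2 (starProjection_apply_mem _ _),
    starProjection_eq_self_iff.2 (starProjection_apply_mem V _), starProjection_orthogonal_val,
    inner_sub_right]

theorem starProjection_eq_zero_iff {x : E} : V.starProjection x = 0 ↔ x ∈ Vᗮ := by
  rw [starProjection_apply, coe_eq_zero, orthogonalProjectionOnto_eq_zero_iff]

theorem starProjection_orthogonal_eq_zero_iff {x : E} : Vᗮ.starProjection x = 0 ↔ x ∈ V := by
  rw [starProjection_orthogonal_val, sub_eq_zero, eq_comm, starProjection_eq_self_iff]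

structure IsAdaptedFrame {p : ℕ} (e : Fin p → E) (k r : ℕ) : Prop where
  orthonormal : Orthonormal ℝ e
  pairwise_inner_starProjection :
    Pairwise fun i j => ⟪V.starProjection (e i), V.starProjection (e j)⟫ = 0
  k_le_r : k ≤ r
  r_le_p : r ≤ p
  notMem : ∀ i : Fin p, (i : ℕ) < k → e i ∉ V ∧ e i ∉ Vᗮ
  mem : ∀ i : Fin p, k ≤ (i : ℕ) → (i : ℕ) < r → e i ∈ V
  mem_orthogonal : ∀ i : Fin p, r ≤ (i : ℕ) → e i ∈ Vᗮ

variable {V}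

theorem IsAdaptedFrame.of_eq_or_eq_neg {p k r : ℕ} {e e' : Fin p → E}
    (he : V.IsAdaptedFrame e k r) (he' : ∀ i, e' i = e i ∨ e' i = -e i) :
    V.IsAdaptedFrame e' k r where
  orthonormal := he.orthonormal.orthonormal_of_forall_eq_or_eq_neg he'
  pairwise_inner_starProjection i j hij := by
    rcases he' i with hi | hi <;> rcases he' j with hj | hj <;>
      simp [hi, hj, he.pairwise_inner_starProjection hij]
  k_le_r := he.k_le_r
  r_le_p := he.r_le_p
  notMem i hi := by rcases he' i with h | h <;> simpa [h] using he.notMem i hi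
  mem i hki hir := by rcases he' i with h | h <;> simpa [h] using he.mem i hki hir
  mem_orthogonal i hi := by rcases he' i with h | h <;> simpa [h] using he.mem_orthogonal i hi

variable (V) [FiniteDimensional ℝ E]

theorem exists_orthonormalBasis_isAdaptedFrame (W : Submodule ℝ E) {p : ℕ}
    (hp : finrank ℝ W = p) :
    ∃ (b : OrthonormalBasis (Fin p) ℝ W) (k r : ℕ), V.IsAdaptedFrame (fun i => (b i : E)) k r := by
  classical
  obtain ⟨b₀, hb₀⟩ :=
    ((V.starProjection : E →ₗ[ℝ] E) ∘ₗ W.subtype).exists_orthonormalBasis_pairwise_inner_eq_zero hp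
  let key : Fin p → ℕ := fun i =>
    if (b₀ i : E) ∈ Vᗮ then 2 else if (b₀ i : E) ∈ V then 1 else 0
  obtain ⟨σ, hσ⟩ : ∃ σ : Equiv.Perm (Fin p), Monotone (key ∘ σ) := ⟨_, Tuple.monotone_sort key⟩
  obtain ⟨k, hkp, hk⟩ := hσ.exists_le_iff_lt 0
  obtain ⟨r, hrp, hr⟩ := hσ.exists_le_iff_lt 1
  refine ⟨b₀.reindex σ.symm, k, r, ?_⟩
  simp only [OrthonormalBasis.reindex_apply, Equiv.symm_symm]
  exact {
    orthonormal := b₀.orthonormal.comp_linearIsometry W.subtypeₗᵢ |>.comp σ σ.injective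
    pairwise_inner_starProjection := fun i j hij => hb₀ (σ.injective.ne hij)
    k_le_r := by
      by_contra! hrk
      have := (hr ⟨r, by omega⟩).1 ((hk ⟨r, by omega⟩).2 hrk |>.trans zero_le_one)
      simp at this
    r_le_p := hrp
    notMem := fun i hi => by
      have := (hk i).2 hi
      simp only [Function.comp_apply, key] at this
      split_ifs at this with h₁ h₂ <;> simp_all
    mem := fun i hki hir => by
      have h₁ := (hr i).2 hir
      have h₀ := mt (hk i).1 (by omega)
      simp only [Function.comp_apply, key] at h₁ h₀
      split_ifs at h₁ h₀ <;> simp_all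
    mem_orthogonal := fun i hi => by
      have := mt (hr i).1 (by omega)
      simp only [Function.comp_apply, key] at this
      split_ifs at this <;> simp_all }

theorem exists_isAdaptedFrame_ιMulti_eq {p : ℕ} (v : Fin p → E) (hv : (gram ℝ v).det = 1) :
    ∃ (e : Fin p → E) (k r : ℕ), V.IsAdaptedFrame e k r ∧
      ExteriorAlgebra.ιMulti ℝ p v = ExteriorAlgebra.ιMulti ℝ p e := by
  let W := span ℝ (Set.range v)
  have hli : LinearIndependent ℝ v := det_gram_ne_zero_iff_linearIndependent.1 (by simp [hv])
  let vW : Fin p → W := fun i => ⟨v i, subset_span ⟨i, rfl⟩⟩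
  have hvW : (gram ℝ vW).det = 1 := by rw [← hv]; rfl
  obtain ⟨b, k, r, hb⟩ := V.exists_orthonormalBasis_isAdaptedFrame W
    ((finrank_span_eq_card hli).trans (Fintype.card_fin p))
  obtain ⟨b', hb'b, hdet⟩ := b.exists_det_eq_one hvW
  refine ⟨fun i => b' i, k, r, hb.of_eq_or_eq_neg fun i => ?_, ?_⟩
  · rcases hb'b i with h | h <;> simp [h]
  · simpa [hdet] using
      ((ExteriorAlgebra.ιMulti ℝ p).compLinearMap W.subtype).map_eq_basis_det_smul b'.toBasis vW

end Submodule

noncomputable def canonicalFrame {E : Type*} [AddCommGroup E] [Module ℝ E] {p r s k : ℕ}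
    (hkr : k ≤ r) (hks : k ≤ s) (hrs : r + s = p + k) (f : Fin r → E) (g : Fin s → E)
    (θ : Fin k → ℝ) :
    Fin p → E := fun i =>
  if h1 : (i : ℕ) < k then
    Real.cos (θ ⟨i, h1⟩) • f (Fin.castLE hkr ⟨i, h1⟩) +
      Real.sin (θ ⟨i, h1⟩) • g (Fin.castLE hks ⟨i, h1⟩)
  else if h2 : (i : ℕ) < r then f ⟨i, h2⟩
  else g ⟨(i : ℕ) - r + k, by omega⟩

namespace Submodule.IsAdaptedFrame

variable {E : Type*} [NormedAddCommGroup E] [InnerProductSpace ℝ E]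
  {V : Submodule ℝ E} [V.HasOrthogonalProjection] {p k r : ℕ} {e : Fin p → E}

theorem starProjection_eq (he : V.IsAdaptedFrame e k r) {i : Fin p} (hki : k ≤ (i : ℕ))
    (hir : (i : ℕ) < r) : V.starProjection (e i) = e i :=
  starProjection_eq_self_iff.2 (he.mem i hki hir)

theorem starProjection_orthogonal_eq (he : V.IsAdaptedFrame e k r) {i : Fin p}
    (hri : r ≤ (i : ℕ)) : Vᗮ.starProjection (e i) = e i :=
  starProjection_eq_self_iff.2 (he.mem_orthogonal i hri)

theorem starProjection_ne_zero (he : V.IsAdaptedFrame e k r) {i : Fin p} (hir : (i : ℕ) < r) :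
    V.starProjection (e i) ≠ 0 := by
  by_cases hik : (i : ℕ) < k
  · exact (starProjection_eq_zero_iff V).not.2 (he.notMem i hik).2
  · rw [he.starProjection_eq (by omega) hir]
    exact he.orthonormal.ne_zero i

theorem starProjection_orthogonal_ne_zero (he : V.IsAdaptedFrame e k r) {i : Fin p}
    (hi : (i : ℕ) < k ∨ r ≤ (i : ℕ)) : Vᗮ.starProjection (e i) ≠ 0 := by
  rcases hi with hik | hri
  · exact (starProjection_orthogonal_eq_zero_iff V).not.2 (he.notMem i hik).1
  · rw [he.starProjection_orthogonal_eq hri]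
    exact he.orthonormal.ne_zero i

theorem pairwise_inner_starProjection_orthogonal (he : V.IsAdaptedFrame e k r) :
    Pairwise fun i j => ⟪Vᗮ.starProjection (e i), Vᗮ.starProjection (e j)⟫ = 0 := fun i j hij => by
  dsimp only
  rw [inner_starProjection_orthogonal, he.orthonormal.inner_eq_zero hij,
    he.pairwise_inner_starProjection hij, sub_zero]

theorem norm_sq_starProjection_add (he : V.IsAdaptedFrame e k r) (i : Fin p) :
    ‖V.starProjection (e i)‖ ^ 2 + ‖Vᗮ.starProjection (e i)‖ ^ 2 = 1 := by
  rw [← norm_sq_eq_add_norm_sq_starProjection, he.orthonormal.1 i, one_pow]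

theorem exists_canonicalFrame_eq (he : V.IsAdaptedFrame e k r) :
    ∃ (s : ℕ) (hks : k ≤ s) (hrs : r + s = p + k) (f : Fin r → E) (g : Fin s → E)
      (θ : Fin k → ℝ), (∀ i, f i ∈ V) ∧ Orthonormal ℝ f ∧ (∀ i, g i ∈ Vᗮ) ∧ Orthonormal ℝ g ∧
      (∀ j, 0 < θ j ∧ θ j < Real.pi / 2) ∧ canonicalFrame he.k_le_r hks hrs f g θ = e := by
  have hkr := he.k_le_r
  have hrp := he.r_le_p
  let u i := V.starProjection (e i)
  let w i := Vᗮ.starProjection (e i)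
  let l : Fin (p + k - r) → Fin p := fun j =>
    ⟨if (j : ℕ) < k then j else j - k + r, by split_ifs <;> omega⟩
  have hl : Function.Injective l := fun a b hab => by
    simp only [l, Fin.mk.injEq] at hab
    ext
    split_ifs at hab <;> omega
  choose θ hθ hcos hsin using fun j : Fin k =>
    exists_angle_cos_sin_eq
      (norm_pos_iff.2 (he.starProjection_ne_zero (i := ⟨j, by omega⟩) (by simp; omega)))
      (norm_pos_iff.2 (he.starProjection_orthogonal_ne_zero (i := ⟨j, by omega⟩) (.inl j.2)))
      (he.norm_sq_starProjection_add _)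
  refine ⟨p + k - r, by omega, by omega, fun i => NormedSpace.normalize (u (Fin.castLE hrp i)),
    fun j => NormedSpace.normalize (w (l j)), θ, fun i => ?_, ?_, fun j => ?_, ?_, hθ, ?_⟩
  · exact V.smul_mem _ (V.starProjection_apply_mem _)
  · exact orthonormal_normalize (fun i => he.starProjection_ne_zero (by simp))
      fun a b hab => he.pairwise_inner_starProjection ((Fin.castLE_injective hrp).ne hab)
  · exact Vᗮ.smul_mem _ (Vᗮ.starProjection_apply_mem _)
  · refine orthonormal_normalize (fun j => he.starProjection_orthogonal_ne_zero ?_)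
      fun a b hab => he.pairwise_inner_starProjection_orthogonal (hl.ne hab)
    simp only [l]
    split_ifs <;> omega
  · funext i
    unfold canonicalFrame
    split_ifs with h1 h2
    · have hli : l ⟨i, by omega⟩ = i := Fin.ext (if_pos h1)
      simp only [Fin.castLE_mk, hli, hcos, hsin, u, w, Fin.eta, NormedSpace.norm_smul_normalize]
      exact V.starProjection_add_starProjection_orthogonal (e i)
    · simp only [u, Fin.castLE_mk, Fin.eta]
      rw [he.starProjection_eq (not_lt.1 h1) h2,
        NormedSpace.normalize_eq_self_of_norm_eq_one (he.orthonormal.1 i)]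
    · have hli : l ⟨i - r + k, by omega⟩ = i := Fin.ext (by simp only [l]; split_ifs <;> omega)
      simp only [hli, w]
      rw [he.starProjection_orthogonal_eq (not_lt.1 h2),
        NormedSpace.normalize_eq_self_of_norm_eq_one (he.orthonormal.1 i)]

end Submodule.IsAdaptedFrame

/-- Harvey–Lawson, Calibrated geometries, Lemma 7.5 (canonical form of a simple
vector with respect to a subspace): any unit simple `p`-vector
`ξ = v₁ ∧ ⋯ ∧ v_p` in `ℝⁿ` (unit: Gram determinant one) can be written as
`(cos θ₁ f₁ + sin θ₁ g₁) ∧ ⋯ ∧ (cos θ_k f_k + sin θ_k g_k) ∧ f_{k+1} ∧ ⋯ ∧ f_r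
∧ g_{k+1} ∧ ⋯ ∧ g_s` with `f`'s orthonormal in `V`, `g`'s orthonormal in `V^⊥`,
`0 < θⱼ < π/2`, `k ≤ r`, `k ≤ s` and `r + s − k = p`. -/
theorem stmt7 (n p : ℕ) (V : Submodule ℝ (EuclideanSpace ℝ (Fin n)))
    (v : Fin p → EuclideanSpace ℝ (Fin n))
    (hunit : (Matrix.of fun i j : Fin p => (inner ℝ (v i) (v j) : ℝ)).det = 1) :
    ∃ (r s k : ℕ) (hkr : k ≤ r) (hks : k ≤ s) (hrs : r + s = p + k)
      (f : Fin r → EuclideanSpace ℝ (Fin n))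
      (g : Fin s → EuclideanSpace ℝ (Fin n)) (θ : Fin k → ℝ),
      (∀ i, f i ∈ V) ∧ Orthonormal ℝ f ∧
      (∀ i, g i ∈ Vᗮ) ∧ Orthonormal ℝ g ∧
      (∀ j, 0 < θ j ∧ θ j < Real.pi / 2) ∧
      ExteriorAlgebra.ιMulti ℝ p v =
        ExteriorAlgebra.ιMulti ℝ p (fun i : Fin p =>
          if h1 : (i : ℕ) < k then
            Real.cos (θ ⟨i, h1⟩) • f ⟨i, by omega⟩ +
              Real.sin (θ ⟨i, h1⟩) • g ⟨i, by omega⟩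
          else if h2 : (i : ℕ) < r then f ⟨i, h2⟩
          else g ⟨(i : ℕ) - r + k, by have := i.isLt; omega⟩) := by
  obtain ⟨e, k, r, he, hve⟩ := V.exists_isAdaptedFrame_ιMulti_eq v hunit
  obtain ⟨s, hks, hrs, f, g, θ, hfV, hf, hgV, hg, hθ, hfe⟩ := he.exists_canonicalFrame_eq
  exact ⟨r, s, k, he.k_le_r, hks, hrs, f, g, θ, hfV, hf, hgV, hg, hθ,
    hve.trans (congrArg _ hfe.symm)⟩
end

section
/- Let φ = e*_J ∧ e*_{n+1} ∧ e*_{n+2} (with J ⊂ {1,…,n} of size p−2) and ψ a p-form on ℝ^{n+2} involving only the coordinates e₁,…,e_n. Let ξ be a unit simple p-vector written in canonical form with respect to V = span{e_{n+1}, e_{n+2}}, with exactly two factors of the form cos θᵢ eᵢ' + sin θᵢ gᵢ (eᵢ' ∈ V unit orthonormal, gᵢ ∈ V^⊥ unit orthonormal) and remaining factors g₃,…,g_p ∈ V^⊥. Then |(φ+ψ)(ξ)| ≤ cos θ₁ cos θ₂ |φ(e₁', e₂', g₃,…,g_p)| + sin θ₁ sin θ₂ |ψ(g₁,…,g_p)|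 ≤ cos(θ₁ − θ₂) · max{1, ‖ψ‖*} ≤ max{1, ‖ψ‖*}. -/
/-!
Expanding `ξ` multilinearly in its two angled slots gives four terms for each form. The form
`φ = e*_J ∧ e*_{n+1} ∧ e*_{n+2}` needs both directions of `V`, which only `e₁', e₂'` provide
together, and `ψ` vanishes as soon as a vector of `V` is inserted; so
`(φ + ψ)(ξ) = cos θ₁ cos θ₂ φ(e₁', e₂', g₃, …) + sin θ₁ sin θ₂ ψ(g₁, …, g_p)`.
The value `φ(e₁', e₂', g₃, …)` is a `p × p` minor of a matrix with unit columns, hence at most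
`1` in absolute value by Hadamard's inequality, and `|ψ(g)| ≤ ‖ψ‖*` because `g` is orthonormal.
The comass is a genuine supremum: factoring the Gram matrix `A Aᵀ = Bᵀ B` of a unit simple
`p`-vector `A` writes `A = Bᵀ U` with `U` orthonormal and `|det B| = 1`, so `ψ(A) = ± ψ(U)`
stays bounded. Finally `cos θ₁ cos θ₂ + sin θ₁ sin θ₂ = cos (θ₁ - θ₂) ≤ 1`.
-/

open Matrix
open scoped MatrixOrder

theorem AlternatingMap.map_sum_smul_eq_det_mul {R M ι : Type*} [CommRing R] [AddCommGroup M]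
    [Module R M] [Fintype ι] [DecidableEq ι] (f : M [⋀^ι]→ₗ[R] R) (C : Matrix ι ι R)
    (u : ι → M) : f (fun i => ∑ j, C i j • u j) = C.det * f u := by
  set L := Fintype.linearCombination R u
  have hbasis : (fun i => L (Pi.basisFun R ι i)) = u := by
    simp only [L, Pi.basisFun_apply, Fintype.linearCombination_apply_single, one_smul]
  have key := congrArg (fun g => g fun i j => C i j)
    ((f.compLinearMap L).eq_smul_basis_det (Pi.basisFun R ι))
  simp only [AlternatingMap.smul_apply, f.compLinearMap_apply, Pi.basisFun_det, smul_eq_mul]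
    at key
  rw [hbasis] at key
  simp only [L, Fintype.linearCombination_apply] at key
  exact key.trans (mul_comm _ _)

theorem AlternatingMap.map_cons_cons_add_smul {R M N : Type*} [CommRing R] [AddCommGroup M]
    [Module R M] [AddCommGroup N] [Module R N] {m : ℕ} (f : M [⋀^Fin (m + 2)]→ₗ[R] N)
    (a b c d : R) (x y z w : M) (t : Fin m → M) :
    f (Fin.cons (a • x + b • y) (Fin.cons (c • z + d • w) t)) =
      (a * c) • f (Fin.cons x (Fin.cons z t)) + (a * d) • f (Fin.cons x (Fin.cons w t)) +
        (b * c) • f (Fin.cons y (Fin.cons z t)) + (b * d) • f (Fin.cons y (Fin.cons w t)) := by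
  have hcurry : ∀ u v, f (Fin.cons u (Fin.cons v t)) = (f.curryLeft u).curryLeft v t :=
    fun _ _ => rfl
  simp only [hcurry, map_add, map_smul, AlternatingMap.curryLeft_add,
    AlternatingMap.curryLeft_smul, LinearMap.add_apply, LinearMap.smul_apply,
    AlternatingMap.add_apply, AlternatingMap.smul_apply]
  module

theorem MultilinearMap.abs_apply_le_of_abs_le_one {ι κ : Type*} [Fintype ι] [DecidableEq ι]
    [Fintype κ] [DecidableEq κ] (f : MultilinearMap ℝ (fun _ : ι => κ → ℝ) ℝ) (u : ι → κ → ℝ)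
    (hu : ∀ i k, |u i k| ≤ 1) : |f u| ≤ ∑ r : ι → κ, |f fun i => Pi.single (r i) 1| := by
  have hexp : f u = ∑ r : ι → κ, (∏ i, u i (r i)) * f fun i => Pi.single (r i) 1 := by
    conv_lhs => rw [show u = fun i => ∑ k, u i k • Pi.single k 1 by
      ext i l; simp [Finset.sum_apply, Pi.single_apply]]
    rw [f.map_sum]
    simp only [f.map_smul_univ, smul_eq_mul]
  rw [hexp]
  refine (Finset.abs_sum_le_sum_abs _ _).trans (Finset.sum_le_sum fun r _ => ?_)
  rw [abs_mul, Finset.abs_prod]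
  exact mul_le_of_le_one_left (abs_nonneg _)
    (Finset.prod_le_one (fun i _ => abs_nonneg _) fun i _ => hu i (r i))

theorem Matrix.det_eq_zero_of_rows_vanish_off_col {R : Type*} [CommRing R] {m : ℕ}
    (M : Matrix (Fin (m + 1)) (Fin (m + 1)) R) {i₀ i₁ j₀ : Fin (m + 1)} (hi : i₀ ≠ i₁)
    (h₀ : ∀ j, j ≠ j₀ → M i₀ j = 0) (h₁ : ∀ j, j ≠ j₀ → M i₁ j = 0) : M.det = 0 := by
  rw [det_succ_column M j₀]
  refine Finset.sum_eq_zero fun i _ => ?_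
  -- every minor along column `j₀` keeps row `i₀` or row `i₁`, which it sees as a zero row
  obtain ⟨r, hr, hri⟩ : ∃ r, (∀ j, j ≠ j₀ → M r j = 0) ∧ r ≠ i := by
    by_cases h : i₀ = i
    · exact ⟨i₁, h₁, h ▸ hi.symm⟩
    · exact ⟨i₀, h₀, h⟩
  obtain ⟨k, rfl⟩ := Fin.exists_succAbove_eq hri
  rw [det_eq_zero_of_row_eq_zero k fun l => hr _ (Fin.succAbove_ne j₀ l), mul_zero]

theorem Matrix.abs_det_le_prod_norm_col {p : ℕ} (M : Matrix (Fin p) (Fin p) ℝ) :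
    |M.det| ≤ ∏ j, ‖WithLp.toLp 2 (fun i => M i j)‖ := by
  have : Fact (Module.finrank ℝ (EuclideanSpace ℝ (Fin p)) = p) := ⟨by simp⟩
  set o := (EuclideanSpace.basisFun (Fin p) ℝ).toBasis.orientation
  have := o.abs_volumeForm_apply_le (fun j => WithLp.toLp 2 (fun i => M i j))
  rwa [o.volumeForm_robust (EuclideanSpace.basisFun (Fin p) ℝ) rfl, Module.Basis.det_apply]
    at this

theorem Matrix.abs_apply_le_one_of_mul_transpose_eq_one {m n : Type*} [Fintype n]
    [DecidableEq m] {U : Matrix m n ℝ} (hU : U * Uᵀ = 1) (i : m) (k : n) : |U i k| ≤ 1 := by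
  have hrow : ∑ l, U i l * U i l = 1 := by
    simpa [mul_apply] using congrFun (congrFun hU i) i
  exact abs_le_one_iff_mul_self_le_one.mpr <| hrow ▸
    Finset.single_le_sum (f := fun l => U i l * U i l) (fun l _ => mul_self_nonneg _)
      (Finset.mem_univ k)

theorem Matrix.exists_eq_mul_of_det_mul_transpose_eq_one {m n : Type*} [Fintype m]
    [DecidableEq m] [Fintype n] (A : Matrix m n ℝ) (hA : (A * Aᵀ).det = 1) :
    ∃ (C : Matrix m m ℝ) (U : Matrix m n ℝ), A = C * U ∧ |C.det| = 1 ∧ U * Uᵀ = 1 := by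
  obtain ⟨B, hB⟩ := CStarAlgebra.nonneg_iff_eq_star_mul_self.mp
    (posSemidef_self_mul_conjTranspose A).nonneg
  rw [conjTranspose_eq_transpose_of_trivial, star_eq_conjTranspose,
    conjTranspose_eq_transpose_of_trivial] at hB
  have hsq : Bᵀ.det * Bᵀ.det = 1 := by
    rwa [hB, det_mul, ← det_transpose B] at hA
  have hunit : IsUnit Bᵀ.det := isUnit_iff_ne_zero.mpr (left_ne_zero_of_mul_eq_one hsq)
  have hdet : |Bᵀ.det| = 1 := by
    rcases mul_self_eq_one_iff.mp hsq with h | h <;> simp [h]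
  refine ⟨Bᵀ, (Bᵀ)⁻¹ * A, (mul_nonsing_inv_cancel_left _ _ hunit).symm, hdet, ?_⟩
  rw [transpose_mul, Matrix.mul_assoc, ← Matrix.mul_assoc A, hB, ← transpose_nonsing_inv,
    transpose_transpose, Matrix.mul_assoc, mul_nonsing_inv B (by rwa [← det_transpose]),
    Matrix.mul_one, transpose_nonsing_inv, nonsing_inv_mul _ hunit]

theorem stdG_apply {N : ℕ} (x y : Fin N → ℝ) : stdG N x y = ∑ k, x k * y k := rfl

theorem of_stdG_eq_mul_transpose {N p : ℕ} (v : Fin p → Fin N → ℝ) :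
    Matrix.of (fun i j => stdG N (v i) (v j)) = Matrix.of v * (Matrix.of v)ᵀ := by
  ext i j
  simp [stdG_apply, mul_apply]

theorem bddAbove_comass_set {N p : ℕ} (Ψ : (Fin N → ℝ) [⋀^Fin p]→ₗ[ℝ] ℝ) :
    BddAbove {c | ∃ v : Fin p → Fin N → ℝ,
      (Matrix.of fun i j => stdG N (v i) (v j)).det = 1 ∧ Ψ v = c} := by
  refine ⟨∑ r : Fin p → Fin N, |Ψ fun i => Pi.single (r i) 1|, ?_⟩
  rintro _ ⟨v, hv, rfl⟩
  rw [of_stdG_eq_mul_transpose] at hv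
  obtain ⟨C, U, hvCU, hC, hU⟩ := (Matrix.of v).exists_eq_mul_of_det_mul_transpose_eq_one hv
  have hΨ : Ψ v = C.det * Ψ (fun i => U i) := by
    rw [← Ψ.map_sum_smul_eq_det_mul]
    congr 1
    ext i k
    simpa [mul_apply, Finset.sum_apply] using congrFun (congrFun hvCU i) k
  calc Ψ v ≤ |Ψ (fun i => U i)| := (le_abs_self _).trans_eq (by rw [hΨ, abs_mul, hC, one_mul])
    _ ≤ _ := Ψ.toMultilinearMap.abs_apply_le_of_abs_le_one _
      (abs_apply_le_one_of_mul_transpose_eq_one hU)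

theorem abs_le_comass {N p : ℕ} [Nontrivial (Fin p)] (Ψ : (Fin N → ℝ) [⋀^Fin p]→ₗ[ℝ] ℝ)
    {v : Fin p → Fin N → ℝ} (hv : ∀ i j, stdG N (v i) (v j) = if i = j then 1 else 0) :
    |Ψ v| ≤ comass Ψ (stdG N) := by
  have le_comass : ∀ w : Fin p → Fin N → ℝ,
      (∀ i j, stdG N (w i) (w j) = if i = j then 1 else 0) → Ψ w ≤ comass Ψ (stdG N) :=
    fun w hw => le_csSup (bddAbove_comass_set Ψ) ⟨w, by
      rw [show Matrix.of (fun i j => stdG N (w i) (w j)) = 1 by ext i j; simp [hw, one_apply],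
        det_one], rfl⟩
  obtain ⟨a, b, hab⟩ := exists_pair_ne (Fin p)
  refine abs_le.mpr ⟨?_, le_comass v hv⟩
  have := le_comass (v ∘ Equiv.swap a b) fun i j => by simp [hv]
  rw [Ψ.map_swap v hab] at this
  linarith

theorem axisForm_apply_s10 {N p : ℕ} (I : Fin p → Fin N) (v : Fin p → Fin N → ℝ) :
    axisForm I v = (Matrix.of fun i j => v j (I i)).det := rfl

theorem abs_axisForm_le_one {N p : ℕ} (I : Fin p → Fin N) {v : Fin p → Fin N → ℝ}
    (hv : ∀ j, stdG N (v j) (v j) ≤ 1) : |axisForm I v| ≤ 1 := by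
  rw [axisForm_apply_s10]
  by_cases hI : Function.Injective I
  · refine (abs_det_le_prod_norm_col _).trans
      (Finset.prod_le_one (fun _ _ => norm_nonneg _) fun j _ => ?_)
    rw [EuclideanSpace.norm_eq, Real.sqrt_le_one]
    calc ∑ i, ‖v j (I i)‖ ^ 2 = ∑ k ∈ Finset.univ.map ⟨I, hI⟩, v j k * v j k := by
          simp [Finset.sum_map, sq]
      _ ≤ ∑ k, v j k * v j k :=
          Finset.sum_le_univ_sum_of_nonneg fun k => mul_self_nonneg _
      _ ≤ 1 := hv j
  · obtain ⟨i, i', hii', hne⟩ := Function.not_injective_iff.mp hI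
    rw [det_zero_of_row_eq hne (by ext j; simp [hii']), abs_zero]
    exact zero_le_one

section LastTwoCoordinates

variable {n q : ℕ}

/-- `x ∈ V = span {e_{n+1}, e_{n+2}}`. -/
def MemV (n : ℕ) (x : Fin (n + 2) → ℝ) : Prop := ∀ i : Fin (n + 2), (i : ℕ) < n → x i = 0

/-- `x ∈ V^⊥`. -/
def MemVPerp (n : ℕ) (x : Fin (n + 2) → ℝ) : Prop := ∀ i : Fin (n + 2), n ≤ (i : ℕ) → x i = 0

theorem axisForm_phiIdx_eq_zero (J : Fin q → Fin n) (j₀ : Fin (q + 2))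
    {v : Fin (q + 2) → Fin (n + 2) → ℝ} (hv : ∀ j, j ≠ j₀ → MemVPerp n (v j)) :
    axisForm (phiIdx n q J) v = 0 :=
  det_eq_zero_of_rows_vanish_off_col _ (Fin.castSucc_lt_last (Fin.last q)).ne
    (fun j hj => hv j hj _ (by simp [phiIdx])) fun j hj => hv j hj _ (by simp [phiIdx])

theorem axisForm_phiIdx_apply_cons_cons (J : Fin q → Fin n) (a b c d : ℝ)
    {x y z w : Fin (n + 2) → ℝ} {t : Fin q → Fin (n + 2) → ℝ} (hy : MemVPerp n y)
    (hw : MemVPerp n w) (ht : ∀ k, MemVPerp n (t k)) :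
    axisForm (phiIdx n q J) (Fin.cons (a • x + b • y) (Fin.cons (c • z + d • w) t)) =
      a * c * axisForm (phiIdx n q J) (Fin.cons x (Fin.cons z t)) := by
  have hvanish : ∀ (u u' : Fin (n + 2) → ℝ) (j₀ : Fin (q + 2)), (j₀ ≠ 0 → MemVPerp n u) →
      (j₀ ≠ 1 → MemVPerp n u') → axisForm (phiIdx n q J) (Fin.cons u (Fin.cons u' t)) = 0 := by
    intro u u' j₀ hu hu'
    refine axisForm_phiIdx_eq_zero J j₀ fun j hj => ?_
    induction j using Fin.cases with
    | zero => exact hu hj.symm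
    | succ j =>
      induction j using Fin.cases with
      | zero => exact hu' hj.symm
      | succ j => exact ht j
  rw [AlternatingMap.map_cons_cons_add_smul, hvanish x w 0 (absurd rfl) fun _ => hw,
    hvanish y z 1 (fun _ => hy) (absurd rfl), hvanish y w 0 (absurd rfl) fun _ => hw]
  simp only [smul_eq_mul, mul_zero, add_zero]

theorem compLinearMap_funLeft_castLE_eq_zero {p : ℕ} (ψ₀ : (Fin n → ℝ) [⋀^Fin p]→ₗ[ℝ] ℝ)
    {v : Fin p → Fin (n + 2) → ℝ} (k : Fin p) (hk : MemV n (v k)) :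
    ψ₀.compLinearMap (LinearMap.funLeft ℝ ℝ (Fin.castLE (Nat.le_add_right n 2))) v = 0 :=
  ψ₀.map_coord_zero k (by ext m; simpa using hk _ (by simp))

theorem compLinearMap_funLeft_castLE_apply_cons_cons (ψ₀ : (Fin n → ℝ) [⋀^Fin (q + 2)]→ₗ[ℝ] ℝ)
    (a b c d : ℝ) {x y z w : Fin (n + 2) → ℝ} {t : Fin q → Fin (n + 2) → ℝ} (hx : MemV n x)
    (hz : MemV n z) :
    letI Ψ := ψ₀.compLinearMap (LinearMap.funLeft ℝ ℝ (Fin.castLE (Nat.le_add_right n 2)))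
    Ψ (Fin.cons (a • x + b • y) (Fin.cons (c • z + d • w) t)) =
      b * d * Ψ (Fin.cons y (Fin.cons w t)) := by
  rw [AlternatingMap.map_cons_cons_add_smul,
    compLinearMap_funLeft_castLE_eq_zero ψ₀ (v := Fin.cons x (Fin.cons z t)) 0 hx,
    compLinearMap_funLeft_castLE_eq_zero ψ₀ (v := Fin.cons x (Fin.cons w t)) 0 hx,
    compLinearMap_funLeft_castLE_eq_zero ψ₀ (v := Fin.cons y (Fin.cons z t)) 1 hz]
  simp only [smul_eq_mul, mul_zero, zero_add]

end LastTwoCoordinates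

theorem cos_mul_cos_mul_add_sin_mul_sin_mul_le {α β a b M : ℝ}
    (hcos : 0 ≤ Real.cos α * Real.cos β) (hsin : 0 ≤ Real.sin α * Real.sin β) (ha : a ≤ M)
    (hb : b ≤ M) :
    Real.cos α * Real.cos β * a + Real.sin α * Real.sin β * b ≤ Real.cos (α - β) * M := by
  rw [Real.cos_sub, add_mul]
  gcongr

theorem stmt10_general (n q : ℕ) (J : Fin q → Fin n)
    (ψ₀ : (Fin n → ℝ) [⋀^Fin (q + 2)]→ₗ[ℝ] ℝ)
    (θ : Fin 2 → ℝ) (hθ : ∀ j, θ j ∈ Set.Ioo 0 (Real.pi / 2))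
    (e' : Fin 2 → (Fin (n + 2) → ℝ))
    (he'V : ∀ j, ∀ i : Fin (n + 2), (i : ℕ) < n → e' j i = 0)
    (he'on : ∀ j k, stdG (n + 2) (e' j) (e' k) = if j = k then 1 else 0)
    (gv : Fin (q + 2) → (Fin (n + 2) → ℝ))
    (hgvV : ∀ j, ∀ i : Fin (n + 2), n ≤ (i : ℕ) → gv j i = 0)
    (hgvon : ∀ j k, stdG (n + 2) (gv j) (gv k) = if j = k then 1 else 0) :
    letI Φ := axisForm (phiIdx n q J)
    letI Ψ := ψ₀.compLinearMap
      (LinearMap.funLeft ℝ ℝ (Fin.castLE (Nat.le_add_right n 2)))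
    letI ξ : Fin (q + 2) → (Fin (n + 2) → ℝ) :=
      Fin.cons (Real.cos (θ 0) • e' 0 + Real.sin (θ 0) • gv 0)
        (Fin.cons (Real.cos (θ 1) • e' 1 + Real.sin (θ 1) • gv 1)
          (fun i : Fin q => gv i.succ.succ))
    letI E : Fin (q + 2) → (Fin (n + 2) → ℝ) :=
      Fin.cons (e' 0) (Fin.cons (e' 1) (fun i : Fin q => gv i.succ.succ))
    |(Φ + Ψ) ξ| ≤
        Real.cos (θ 0) * Real.cos (θ 1) * |Φ E| +
          Real.sin (θ 0) * Real.sin (θ 1) * |Ψ gv| ∧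
    Real.cos (θ 0) * Real.cos (θ 1) * |Φ E| +
        Real.sin (θ 0) * Real.sin (θ 1) * |Ψ gv| ≤
      Real.cos (θ 0 - θ 1) * max 1 (comass Ψ (stdG (n + 2))) ∧
    Real.cos (θ 0 - θ 1) * max 1 (comass Ψ (stdG (n + 2))) ≤
      max 1 (comass Ψ (stdG (n + 2))) := by
  set t : Fin q → Fin (n + 2) → ℝ := fun i => gv i.succ.succ
  have hcos : ∀ j, 0 ≤ Real.cos (θ j) := fun j =>
    Real.cos_nonneg_of_mem_Icc ⟨by linarith [(hθ j).1, Real.pi_pos], (hθ j).2.le⟩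
  have hsin : ∀ j, 0 ≤ Real.sin (θ j) := fun j =>
    Real.sin_nonneg_of_nonneg_of_le_pi (hθ j).1.le (by linarith [(hθ j).2, Real.pi_pos])
  have hΦξ := axisForm_phiIdx_apply_cons_cons J (Real.cos (θ 0)) (Real.sin (θ 0))
    (Real.cos (θ 1)) (Real.sin (θ 1)) (x := e' 0) (z := e' 1) (t := t) (hgvV 0) (hgvV 1)
    fun _ => hgvV _
  have hΨξ := compLinearMap_funLeft_castLE_apply_cons_cons ψ₀ (Real.cos (θ 0)) (Real.sin (θ 0))
    (Real.cos (θ 1)) (Real.sin (θ 1)) (y := gv 0) (w := gv 1) (t := t) (he'V 0) (he'V 1)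
  rw [show Fin.cons (gv 1) t = Fin.tail gv from Fin.cons_self_tail (Fin.tail gv),
    Fin.cons_self_tail] at hΨξ
  set Φ := axisForm (phiIdx n q J)
  set Ψ := ψ₀.compLinearMap (LinearMap.funLeft ℝ ℝ (Fin.castLE (Nat.le_add_right n 2)))
  have hΦE : |Φ (Fin.cons (e' 0) (Fin.cons (e' 1) t))| ≤ 1 :=
    abs_axisForm_le_one _ fun j => by
      induction j using Fin.cases with
      | zero => simp [he'on]
      | succ j => induction j using Fin.cases <;> simp [he'on, hgvon, t]
  have hΨgv : |Ψ gv| ≤ comass Ψ (stdG (n + 2)) := abs_le_comass Ψ hgvon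
  have hM : 1 ≤ max 1 (comass Ψ (stdG (n + 2))) := le_max_left _ _
  refine ⟨?_, ?_, mul_le_of_le_one_left (by linarith) (Real.cos_le_one _)⟩
  · rw [AlternatingMap.add_apply, hΦξ, hΨξ]
    refine (abs_add_le _ _).trans_eq ?_
    simp only [abs_mul, abs_of_nonneg (hcos _), abs_of_nonneg (hsin _)]
  · exact cos_mul_cos_mul_add_sin_mul_sin_mul_le (mul_nonneg (hcos 0) (hcos 1))
      (mul_nonneg (hsin 0) (hsin 1)) (hΦE.trans hM) (hΨgv.trans (le_max_right _ _))

/-- For `φ = e*_J ∧ e*_{n+1} ∧ e*_{n+2}` and `ψ` a `p`-form involving only the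
first `n` coordinates (`p = q+2`), and a unit simple `p`-vector `ξ` in canonical
form w.r.t. `V = span{e_{n+1}, e_{n+2}}` with exactly two angled factors
`cos θᵢ eᵢ' + sin θᵢ gᵢ` and remaining orthonormal factors `g₃,…,g_p ∈ V^⊥`:
`|(φ+ψ)(ξ)| ≤ cos θ₁ cos θ₂ |φ(e₁',e₂',g₃,…)| + sin θ₁ sin θ₂ |ψ(g₁,…,g_p)|
 ≤ cos(θ₁−θ₂)·max{1,‖ψ‖*} ≤ max{1,‖ψ‖*}`. -/
theorem stmt10 (n q : ℕ) (J : Fin q → Fin n) (hJ : StrictMono J)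
    (ψ₀ : (Fin n → ℝ) [⋀^Fin (q + 2)]→ₗ[ℝ] ℝ)
    (θ : Fin 2 → ℝ) (hθ : ∀ j, θ j ∈ Set.Ioo 0 (Real.pi / 2))
    (e' : Fin 2 → (Fin (n + 2) → ℝ))
    (he'V : ∀ j, ∀ i : Fin (n + 2), (i : ℕ) < n → e' j i = 0)
    (he'on : ∀ j k, stdG (n + 2) (e' j) (e' k) = if j = k then 1 else 0)
    (gv : Fin (q + 2) → (Fin (n + 2) → ℝ))
    (hgvV : ∀ j, ∀ i : Fin (n + 2), n ≤ (i : ℕ) → gv j i = 0)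
    (hgvon : ∀ j k, stdG (n + 2) (gv j) (gv k) = if j = k then 1 else 0) :
    letI Φ := axisForm (phiIdx n q J)
    letI Ψ := ψ₀.compLinearMap
      (LinearMap.funLeft ℝ ℝ (Fin.castLE (Nat.le_add_right n 2)))
    letI ξ : Fin (q + 2) → (Fin (n + 2) → ℝ) :=
      Fin.cons (Real.cos (θ 0) • e' 0 + Real.sin (θ 0) • gv 0)
        (Fin.cons (Real.cos (θ 1) • e' 1 + Real.sin (θ 1) • gv 1)
          (fun i : Fin q => gv i.succ.succ))
    letI E : Fin (q + 2) → (Fin (n + 2) → ℝ) :=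
      Fin.cons (e' 0) (Fin.cons (e' 1) (fun i : Fin q => gv i.succ.succ))
    |(Φ + Ψ) ξ| ≤
        Real.cos (θ 0) * Real.cos (θ 1) * |Φ E| +
          Real.sin (θ 0) * Real.sin (θ 1) * |Ψ gv| ∧
    Real.cos (θ 0) * Real.cos (θ 1) * |Φ E| +
        Real.sin (θ 0) * Real.sin (θ 1) * |Ψ gv| ≤
      Real.cos (θ 0 - θ 1) * max 1 (comass Ψ (stdG (n + 2))) ∧
    Real.cos (θ 0 - θ 1) * max 1 (comass Ψ (stdG (n + 2))) ≤
      max 1 (comass Ψ (stdG (n + 2))) :=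
  stmt10_general n q J ψ₀ θ hθ e' he'V he'on gv hgvV hgvon
end
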